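/- Let G be a graph and G' be obtained from G by attaching a pendant vertex to every vertex of G. If D is an independent dominating set of G, then U* := (V(G) \ D) ∪ {v' : v ∈ D} is the unique minimum vertex cover of G' among those disjoint from D; in particular, (∅, D) is a feasible pre-assignment of G' of size |D| under the Mixed model. -/

import Mathlib

variable {V : Type*} [Fintype V] [DecidableEq V]

/-- `C` is a vertex cover of `G`: every edge has an endpoint in `C`. -/
def IsVertexCover (G : SimpleGraph V) (C : Finset V) : Prop :=
  ∀ ⦃u v : V⦄, G.Adj u v → u ∈ C ∨ v ∈ C

/-- `C` is a minimum vertex cover of `G`. -/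
def IsMinVertexCover (G : SimpleGraph V) (C : Finset V) : Prop :=
  IsVertexCover G C ∧ ∀ D : Finset V, IsVertexCover G D → C.card ≤ D.card

/-- The vertex cover number τ(G). -/
noncomputable def tau (G : SimpleGraph V) : ℕ :=
  sInf {n : ℕ | ∃ C : Finset V, IsVertexCover G C ∧ C.card = n}

/-- `I` is an independent set of `G`. -/
def IsIndepSet (G : SimpleGraph V) (I : Finset V) : Prop :=
  ∀ u ∈ I, ∀ v ∈ I, ¬ G.Adj u v

/-- `D` is a dominating set of `G`. -/
def IsDomSet (G : SimpleGraph V) (D : Finset V) : Prop :=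
  ∀ v : V, v ∈ D ∨ ∃ u ∈ D, G.Adj u v

/-- N(X): vertices outside `X` adjacent to some vertex of `X`. -/
def NFinset (G : SimpleGraph V) [DecidableRel G.Adj] (X : Finset V) : Finset V :=
  (X.biUnion fun v => G.neighborFinset v) \ X

/-- `C` is a vertex cover of the induced subgraph `G - S` (vertices outside `S`). -/
def IsVCOutside (G : SimpleGraph V) (S C : Finset V) : Prop :=
  Disjoint C S ∧ ∀ ⦃u v : V⦄, G.Adj u v → u ∉ S → v ∉ S → u ∈ C ∨ v ∈ C

/-- `C` is a minimum vertex cover of the induced subgraph `G - S`. -/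
def IsMinVCOutside (G : SimpleGraph V) (S C : Finset V) : Prop :=
  IsVCOutside G S C ∧ ∀ D : Finset V, IsVCOutside G S D → C.card ≤ D.card

/-- Feasibility under the Include model. -/
def FeasibleInclude (G : SimpleGraph V) (U : Finset V) : Prop :=
  ∃! C : Finset V, IsMinVertexCover G C ∧ U ⊆ C

/-- Feasibility under the Exclude model. -/
def FeasibleExclude (G : SimpleGraph V) (U : Finset V) : Prop :=
  ∃! C : Finset V, IsMinVertexCover G C ∧ Disjoint C U

/-- Feasibility under the Mixed model. -/
def FeasibleMixed (G : SimpleGraph V) (Uin Uex : Finset V) : Prop :=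
  ∃! C : Finset V, IsMinVertexCover G C ∧ Uin ⊆ C ∧ Disjoint C Uex

/-- The graph `G'` obtained by attaching a pendant vertex `Sum.inr v`
to each vertex `Sum.inl v` of `G`. -/
def pendant (G : SimpleGraph V) : SimpleGraph (V ⊕ V) where
  Adj x y :=
    match x, y with
    | Sum.inl u, Sum.inl v => G.Adj u v
    | Sum.inl u, Sum.inr v => u = v
    | Sum.inr u, Sum.inl v => u = v
    | Sum.inr _, Sum.inr _ => False
  symm := by
    constructor
    rintro (u | u) (v | v) h
    · exact h.symm
    · exact h.symm
    · exact h.symm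
    · exact h
  loopless := by
    constructor
    rintro (u | u) h
    · exact G.loopless.irrefl u h
    · exact h

/-!
Each edge `v v'` of `G'` forces `v` or `v'` into any vertex cover, so every cover of `G'` has at
least `|V(G)|` vertices, and `U*`, which picks exactly one end of every pendant edge, has exactly
that many. It is a cover because `D` is independent, so every edge of `G` meets `V(G) \ D`. A cover
avoiding `D` must contain `v'` for `v ∈ D`, and every `v ∉ D`, since `v` has a neighbour in the
dominating set `D`; hence it contains `U*`, and if it is minimum it equals `U*`.
-/

section PendantCover

variable {V : Type*}

lemma pendant_adj_inl_inr (G : SimpleGraph V) (v : V) :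
    (pendant G).Adj (Sum.inl v) (Sum.inr v) := rfl

variable [Fintype V]

lemma card_le_card_of_isVertexCover_pendant {G : SimpleGraph V} {C : Finset (V ⊕ V)}
    (hC : IsVertexCover (pendant G) C) : Fintype.card V ≤ C.card := by
  refine Finset.card_le_card_of_surjOn (Sum.elim id id) fun v _ => ?_
  rcases hC (pendant_adj_inl_inr G v) with h | h
  · exact ⟨_, h, rfl⟩
  · exact ⟨_, h, rfl⟩

variable [DecidableEq V]

/-- The cover `U* = (V(G) \ D) ∪ {v' : v ∈ D}` of `pendant G`. -/
def pendantCover (D : Finset V) : Finset (V ⊕ V) :=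
  ((Finset.univ \ D).image Sum.inl) ∪ (D.image Sum.inr)

variable {D : Finset V}

@[simp]
lemma inl_mem_pendantCover {v : V} : Sum.inl v ∈ pendantCover D ↔ v ∉ D := by
  simp [pendantCover]

@[simp]
lemma inr_mem_pendantCover {v : V} : Sum.inr v ∈ pendantCover D ↔ v ∈ D := by
  simp [pendantCover]

lemma card_pendantCover (D : Finset V) : (pendantCover D).card = Fintype.card V := by
  rw [pendantCover, Finset.card_union_of_disjoint (by simp [Finset.disjoint_left]),
    Finset.card_image_of_injective _ Sum.inl_injective,
    Finset.card_image_of_injective _ Sum.inr_injective,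
    Finset.card_sdiff_add_card_eq_card D.subset_univ, Finset.card_univ]

lemma disjoint_pendantCover_image_inl (D : Finset V) :
    Disjoint (pendantCover D) (D.image Sum.inl) := by
  simp [Finset.disjoint_right]

lemma isVertexCover_pendantCover {G : SimpleGraph V} (hI : IsIndepSet G D) :
    IsVertexCover (pendant G) (pendantCover D) := by
  rintro (u | u) (v | v) h
  · rw [inl_mem_pendantCover, inl_mem_pendantCover]
    by_contra! huv
    exact hI u huv.1 v huv.2 h
  · obtain rfl : u = v := h
    rw [inl_mem_pendantCover, inr_mem_pendantCover]
    exact (em (u ∈ D)).symm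
  · obtain rfl : u = v := h
    rw [inl_mem_pendantCover, inr_mem_pendantCover]
    exact em (u ∈ D)
  · exact h.elim

lemma isMinVertexCover_pendantCover {G : SimpleGraph V} (hI : IsIndepSet G D) :
    IsMinVertexCover (pendant G) (pendantCover D) :=
  ⟨isVertexCover_pendantCover hI, fun _ hC =>
    card_pendantCover D ▸ card_le_card_of_isVertexCover_pendant hC⟩

lemma pendantCover_subset {G : SimpleGraph V} (hD : IsDomSet G D) {U : Finset (V ⊕ V)}
    (hU : IsVertexCover (pendant G) U) (hUD : Disjoint U (D.image Sum.inl)) :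
    pendantCover D ⊆ U := by
  have h_inl_notMem {u : V} (hu : u ∈ D) : Sum.inl u ∉ U :=
    fun hU => Finset.disjoint_left.mp hUD hU (Finset.mem_image_of_mem _ hu)
  rintro (v | v) hv
  · rw [inl_mem_pendantCover] at hv
    obtain ⟨u, hu, huv⟩ := (hD v).resolve_left hv
    exact (hU (show (pendant G).Adj (Sum.inl u) (Sum.inl v) from huv)).resolve_left
      (h_inl_notMem hu)
  · rw [inr_mem_pendantCover] at hv
    exact (hU (pendant_adj_inl_inr G v)).resolve_left (h_inl_notMem hv)

lemma eq_pendantCover {G : SimpleGraph V} (hI : IsIndepSet G D) (hD : IsDomSet G D)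
    {U : Finset (V ⊕ V)} (hU : IsMinVertexCover (pendant G) U)
    (hUD : Disjoint U (D.image Sum.inl)) : U = pendantCover D :=
  (Finset.eq_of_subset_of_card_le (pendantCover_subset hD hU.1 hUD)
    (hU.2 _ (isVertexCover_pendantCover hI))).symm

end PendantCover

/-- for an independent dominating set D of G, the set
U* = (V(G) \ D) ∪ {v' : v ∈ D} is the unique minimum vertex cover of G' disjoint
from D; in particular (∅, D) is a Mixed-feasible pre-assignment of size |D|. -/
theorem stmt9 (G : SimpleGraph V) (D : Finset V)
    (hI : IsIndepSet G D) (hD : IsDomSet G D) :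
    (IsMinVertexCover (pendant G)
        (((Finset.univ \ D).image (Sum.inl : V → V ⊕ V)) ∪ (D.image (Sum.inr : V → V ⊕ V))) ∧
      (∀ U : Finset (V ⊕ V), IsMinVertexCover (pendant G) U →
        Disjoint U (D.image (Sum.inl : V → V ⊕ V)) →
          U = ((Finset.univ \ D).image (Sum.inl : V → V ⊕ V)) ∪ (D.image (Sum.inr : V → V ⊕ V)))) ∧
    FeasibleMixed (pendant G) ∅ (D.image (Sum.inl : V → V ⊕ V)) ∧
    (∅ : Finset (V ⊕ V)).card + (D.image (Sum.inl : V → V ⊕ V)).card = D.card := by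
  refine ⟨⟨isMinVertexCover_pendantCover hI, fun _ => eq_pendantCover hI hD⟩,
    ⟨pendantCover D, ⟨isMinVertexCover_pendantCover hI, Finset.empty_subset _,
      disjoint_pendantCover_image_inl D⟩, fun U hU => eq_pendantCover hI hD hU.1 hU.2.2⟩, ?_⟩
  simp [Finset.card_image_of_injective _ Sum.inl_injective]
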